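/- There exists a finite unital ring R that is alternative (i.e., (a,a,b) = 0 and (a,b,b) = 0 for all a,b ∈ R), non-associative, non-commutative, and centrally essential. -/

import Mathlib

set_option linter.unusedSectionVars false

/-- The associator `(a,b,c) = (ab)c - a(bc)` in a not necessarily associative ring. -/
def naAssociator {R : Type*} [NonAssocRing R] (a b c : R) : R := a * b * c - a * (b * c)

/-- The commutator `[a,b] = ab - ba` in a not necessarily associative ring. -/
def naCommutator {R : Type*} [NonAssocRing R] (a b : R) : R := a * b - b * a

/-- The associative center `N(R)`. -/
def assocCenter (R : Type*) [NonAssocRing R] : Set R :=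
  {x | ∀ a b : R, naAssociator x a b = 0 ∧ naAssociator a x b = 0 ∧ naAssociator a b x = 0}

/-- The commutative center `K(R)`. -/
def commCenter (R : Type*) [NonAssocRing R] : Set R :=
  {x | ∀ a : R, naCommutator x a = 0}

/-- The center `Z(R) = N(R) ∩ K(R)`. -/
def ringCenter (R : Type*) [NonAssocRing R] : Set R :=
  assocCenter R ∩ commCenter R

/-- A ring is centrally essential if for every nonzero `r` there is a central `z`
with `z * r ≠ 0` central. -/
def IsCentrallyEssential (R : Type*) [NonAssocRing R] : Prop :=
  ∀ r : R, r ≠ 0 → ∃ z ∈ ringCenter R, z * r ≠ 0 ∧ z * r ∈ ringCenter R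

/-- A ring is left `N`-essential. -/
def IsLeftNEssential (R : Type*) [NonAssocRing R] : Prop :=
  ∀ r : R, r ≠ 0 → ∃ n ∈ assocCenter R, n * r ≠ 0 ∧ n * r ∈ assocCenter R

/-- A ring is right `N`-essential. -/
def IsRightNEssential (R : Type*) [NonAssocRing R] : Prop :=
  ∀ r : R, r ≠ 0 → ∃ n ∈ assocCenter R, r * n ≠ 0 ∧ r * n ∈ assocCenter R

/-- `I` is an essential ideal of `B` (elementwise formulation). -/
def EssentialIn {R : Type*} [NonAssocRing R] (I B : Set R) : Prop :=
  ∀ b ∈ B, b ≠ 0 → ∃ d ∈ B, d * b ≠ 0 ∧ d * b ∈ I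

/-- The Cayley–Dickson ring `(A, α)`: the abelian group `A ⊕ A` with multiplication
`(a₁,a₂)(a₃,a₄) = (a₁a₃ + α(a₄a₂*), a₁*a₄ + a₃a₂)`. -/
@[ext]
structure CD (A : Type*) (α : A) : Type _ where
  re : A
  im : A

namespace CD

variable {A : Type*} [NonAssocRing A] [StarRing A] {α : A}

instance : Zero (CD A α) := ⟨⟨0, 0⟩⟩
instance : Add (CD A α) := ⟨fun z w => ⟨z.re + w.re, z.im + w.im⟩⟩
instance : Neg (CD A α) := ⟨fun z => ⟨-z.re, -z.im⟩⟩
instance : One (CD A α) := ⟨⟨1, 0⟩⟩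
instance : Mul (CD A α) :=
  ⟨fun z w => ⟨z.re * w.re + α * (w.im * star z.im), star z.re * w.im + w.re * z.im⟩⟩
instance : Star (CD A α) := ⟨fun z => ⟨star z.re, -z.im⟩⟩

@[simp] theorem zero_re : (0 : CD A α).re = 0 := rfl
@[simp] theorem zero_im : (0 : CD A α).im = 0 := rfl
@[simp] theorem one_re : (1 : CD A α).re = 1 := rfl
@[simp] theorem one_im : (1 : CD A α).im = 0 := rfl
@[simp] theorem add_re (z w : CD A α) : (z + w).re = z.re + w.re := rfl
@[simp] theorem add_im (z w : CD A α) : (z + w).im = z.im + w.im := rfl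
@[simp] theorem neg_re (z : CD A α) : (-z).re = -z.re := rfl
@[simp] theorem neg_im (z : CD A α) : (-z).im = -z.im := rfl
@[simp] theorem mul_re (z w : CD A α) :
    (z * w).re = z.re * w.re + α * (w.im * star z.im) := rfl
@[simp] theorem mul_im (z w : CD A α) :
    (z * w).im = star z.re * w.im + w.re * z.im := rfl
@[simp] theorem star_re (z : CD A α) : (star z).re = star z.re := rfl
@[simp] theorem star_im (z : CD A α) : (star z).im = -z.im := rfl
@[simp] theorem mk_re (x y : A) : (⟨x, y⟩ : CD A α).re = x := rfl
@[simp] theorem mk_im (x y : A) : (⟨x, y⟩ : CD A α).im = y := rfl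

instance : NonAssocRing (CD A α) where
  add_assoc a b c := by ext <;> simp [add_assoc]
  zero_add a := by ext <;> simp
  add_zero a := by ext <;> simp
  add_comm a b := by ext <;> simp [add_comm]
  neg_add_cancel a := by ext <;> simp
  nsmul := nsmulRec
  zsmul := zsmulRec
  left_distrib a b c := by ext <;> simp [mul_add, add_mul] <;> abel
  right_distrib a b c := by ext <;> simp [mul_add, add_mul, star_add] <;> abel
  zero_mul a := by ext <;> simp
  mul_zero a := by ext <;> simp
  one_mul a := by ext <;> simp
  mul_one a := by ext <;> simp

instance {A : Type*} {α : A} [Finite A] : Finite (CD A α) :=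
  Finite.of_injective (fun z : CD A α => (z.re, z.im))
    (fun z w h => by cases z; cases w; simpa using h)

/-- If `α` commutes with every element and `star α = α`, then `(a,b) ↦ (a*, -b)`
makes `(A, α)` a star ring. -/
def starRing (h : ∀ t : A, α * t = t * α) (hs : star α = α) : StarRing (CD A α) where
  star := star
  star_involutive z := by ext <;> simp
  star_mul z w := by
    ext <;>
      simp [StarMul.star_mul, star_star, StarAddMonoid.star_add, star_neg, hs, h, mul_neg, neg_mul,
        neg_add] <;>
      abel
  star_add z w := by ext <;> simp [StarAddMonoid.star_add, neg_add] <;> abel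

/-- An element of the form `(x, 0)` with `x` commuting with everything and `star x = x`
commutes with every element of `(A, α)`. -/
theorem mk_zero_comm {x : A} (hx : ∀ t : A, x * t = t * x) (hsx : star x = x) (z : CD A α) :
    (⟨x, 0⟩ : CD A α) * z = z * ⟨x, 0⟩ := by
  ext <;> simp [hsx, hx]

end CD

/-!
The example is the ring of octonions over `ℤ/4`, obtained from `ℤ/4` by three Cayley–Dickson
doublings with `α = -1`. Left alternativity is a coordinate computation, and right alternativity
follows from it by applying the involution. Reduction mod 2 maps it onto the octonions over `𝔽₂`,
which are commutative and associative: in characteristic 2 with trivial involution, doubling a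
commutative associative ring `A` just gives `A[x]/(x² - α)`. The kernel of the reduction is the
2-torsion, so every associator and commutator is killed by 2, and hence every `2x` is central.
A nonzero `r` is then either 2-torsion, hence of the form `2s` and itself central, or `2r` is a
nonzero central multiple of it.
-/

section

variable {R : Type*} [NonAssocRing R]

theorem star_naAssociator [StarRing R] (a b c : R) :
    star (naAssociator a b c) = -naAssociator (star c) (star b) (star a) := by
  simp only [naAssociator, star_sub, star_mul, neg_sub]

theorem naAssociator_self_right_of_self_left [StarRing R]
    (h : ∀ a b : R, naAssociator a a b = 0) (a b : R) : naAssociator a b b = 0 := by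
  rw [← star_eq_zero, star_naAssociator, h, neg_zero]

theorem one_mem_ringCenter : (1 : R) ∈ ringCenter R :=
  ⟨fun a b => by simp [naAssociator], fun a => by simp [naCommutator]⟩

theorem add_self_mem_ringCenter
    (hassoc : ∀ x a b : R, naAssociator x a b + naAssociator x a b = 0)
    (hcomm : ∀ x a : R, naCommutator x a + naCommutator x a = 0) (x : R) :
    x + x ∈ ringCenter R := by
  refine ⟨fun a b => ⟨?_, ?_, ?_⟩, fun a => ?_⟩
  · rw [← hassoc x a b]; simp only [naAssociator, add_mul]; abel
  · rw [← hassoc a x b]; simp only [naAssociator, add_mul, mul_add]; abel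
  · rw [← hassoc a b x]; simp only [naAssociator, mul_add]; abel
  · rw [← hcomm x a]; simp only [naCommutator, add_mul, mul_add]; abel

theorem isCentrallyEssential_of_add_self_mem_ringCenter (hcenter : ∀ x : R, x + x ∈ ringCenter R)
    (hhalf : ∀ r : R, r + r = 0 → ∃ s, s + s = r) : IsCentrallyEssential R := by
  intro r hr
  by_cases h2 : r + r = 0
  · obtain ⟨s, rfl⟩ := hhalf r h2
    exact ⟨1, one_mem_ringCenter, by rwa [one_mul], by rw [one_mul]; exact hcenter s⟩
  · refine ⟨1 + 1, hcenter 1, ?_, ?_⟩ <;> rw [add_mul, one_mul]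
    exacts [h2, hcenter r]

variable {S : Type*} [NonAssocRing S] {f : R →+* S}

theorem naAssociator_add_self_eq_zero_of_ringHom (hker : ∀ r, f r = 0 ↔ r + r = 0)
    (hS : ∀ a b c : S, a * b * c = a * (b * c)) (x a b : R) :
    naAssociator x a b + naAssociator x a b = 0 :=
  (hker _).1 (by simp [naAssociator, hS])

theorem naCommutator_add_self_eq_zero_of_ringHom (hker : ∀ r, f r = 0 ↔ r + r = 0)
    (hS : ∀ a b : S, a * b = b * a) (x a : R) :
    naCommutator x a + naCommutator x a = 0 :=
  (hker _).1 (by simp [naCommutator, hS])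

end

instance (n : ℕ) : StarRing (ZMod n) := starRingOfComm

instance (n : ℕ) : TrivialStar (ZMod n) := ⟨fun _ => rfl⟩

namespace CD

instance {A : Type*} {α : A} [DecidableEq A] : DecidableEq (CD A α) :=
  fun z w => decidable_of_iff (z.re = w.re ∧ z.im = w.im) CD.ext_iff.symm

section

variable {A B : Type*} [NonAssocRing A] [StarRing A] [NonAssocRing B] [StarRing B] {α : A} {β : B}

-- Restating `star` keeps `CD.star_re` and `CD.star_im` usable as simp lemmas.
instance instStarRingNegOne : StarRing (CD A (-1)) :=
  { CD.starRing (α := (-1 : A)) (fun t => by rw [neg_one_mul, mul_neg_one]) (by simp) with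
    star := star }

def map (f : A →+* B) (hf : ∀ a, f (star a) = star (f a)) (hα : f α = β) :
    CD A α →+* CD B β where
  toFun z := ⟨f z.re, f z.im⟩
  map_one' := by ext <;> simp
  map_mul' z w := by ext <;> simp [hf, hα]
  map_zero' := by ext <;> simp
  map_add' z w := by ext <;> simp

variable {f : A →+* B} {hf : ∀ a, f (star a) = star (f a)} {hα : f α = β}

@[simp] theorem map_re (z : CD A α) : (map f hf hα z).re = f z.re := rfl
@[simp] theorem map_im (z : CD A α) : (map f hf hα z).im = f z.im := rfl

theorem map_star (z : CD A α) : map f hf hα (star z) = star (map f hf hα z) := by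
  ext <;> simp [hf]

theorem map_eq_zero_iff (hker : ∀ a, f a = 0 ↔ a + a = 0) (z : CD A α) :
    map f hf hα z = 0 ↔ z + z = 0 := by
  simp [CD.ext_iff, hker]

theorem exists_add_self_eq (hhalf : ∀ a : A, a + a = 0 → ∃ b, b + b = a) (z : CD A α)
    (hz : z + z = 0) : ∃ w, w + w = z := by
  obtain ⟨r, hr⟩ := hhalf z.re (congrArg re hz)
  obtain ⟨i, hi⟩ := hhalf z.im (congrArg im hz)
  exact ⟨⟨r, i⟩, CD.ext hr hi⟩

end

end CD

structure IsCommCharTwoTrivialStar (A : Type*) [NonAssocRing A] [Star A] : Prop where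
  mul_comm : ∀ a b : A, a * b = b * a
  mul_assoc : ∀ a b c : A, a * b * c = a * (b * c)
  neg_eq : ∀ a : A, -a = a
  star_eq : ∀ a : A, star a = a

theorem IsCommCharTwoTrivialStar.cd {A : Type*} [NonAssocRing A] [StarRing A] {α : A}
    (h : IsCommCharTwoTrivialStar A) : IsCommCharTwoTrivialStar (CD A α) := by
  let _ : CommRing A := { ‹NonAssocRing A› with mul_comm := h.mul_comm, mul_assoc := h.mul_assoc }
  refine ⟨fun z w => ?_, fun z w v => ?_, fun z => ?_, fun z => ?_⟩ <;>
    ext <;> simp [h.star_eq, h.neg_eq] <;> ring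

abbrev Octonion (R : Type*) [CommRing R] [StarRing R] : Type _ := CD (CD (CD R (-1)) (-1)) (-1)

namespace Octonion

variable {R S : Type*} [CommRing R] [StarRing R] [TrivialStar R] [CommRing S] [StarRing S]
  [TrivialStar S]

set_option maxHeartbeats 1000000 in
theorem naAssociator_self_left (a b : Octonion R) : naAssociator a a b = 0 := by
  ext <;> simp only [naAssociator, sub_eq_add_neg, CD.mul_re, CD.mul_im, CD.add_re, CD.add_im,
    CD.neg_re, CD.neg_im, CD.star_re, CD.star_im, CD.zero_re, CD.zero_im, CD.one_re, CD.one_im,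
    star_trivial, star_neg, star_add, neg_mul, mul_neg, neg_neg, neg_add_rev] <;> ring

theorem naAssociator_self_right (a b : Octonion R) : naAssociator a b b = 0 :=
  naAssociator_self_right_of_self_left naAssociator_self_left a b

def map (f : R →+* S) : Octonion R →+* Octonion S :=
  CD.map (CD.map (CD.map f (by simp) (by simp)) CD.map_star (by simp)) CD.map_star (by simp)

theorem map_eq_zero_iff {f : R →+* S} (hker : ∀ a, f a = 0 ↔ a + a = 0) (z : Octonion R) :
    map f z = 0 ↔ z + z = 0 :=
  CD.map_eq_zero_iff (CD.map_eq_zero_iff (CD.map_eq_zero_iff hker)) z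

theorem exists_add_self_eq (hhalf : ∀ a : R, a + a = 0 → ∃ b, b + b = a) (z : Octonion R)
    (hz : z + z = 0) : ∃ w, w + w = z :=
  CD.exists_add_self_eq (CD.exists_add_self_eq (CD.exists_add_self_eq hhalf)) z hz

theorem isCommCharTwoTrivialStar (h : IsCommCharTwoTrivialStar R) :
    IsCommCharTwoTrivialStar (Octonion R) :=
  h.cd.cd.cd

end Octonion

theorem stmt17 :
    ∃ (R : Type) (_ : NonAssocRing R), Finite R ∧
      (∀ a b : R, naAssociator a a b = 0 ∧ naAssociator a b b = 0) ∧
      (¬ ∀ a b c : R, a * b * c = a * (b * c)) ∧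
      (¬ ∀ a b : R, a * b = b * a) ∧
      IsCentrallyEssential R := by
  let f : ZMod 4 →+* ZMod 2 := ZMod.castHom (by norm_num) (ZMod 2)
  have hker : ∀ a : ZMod 4, f a = 0 ↔ a + a = 0 := by decide
  have hhalf : ∀ a : ZMod 4, a + a = 0 → ∃ b, b + b = a := by decide
  have hF₂ : IsCommCharTwoTrivialStar (Octonion (ZMod 2)) :=
    Octonion.isCommCharTwoTrivialStar ⟨mul_comm, mul_assoc, by decide, fun _ => rfl⟩
  have hker' := Octonion.map_eq_zero_iff hker
  refine ⟨Octonion (ZMod 4), inferInstance, inferInstance,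
    fun a b => ⟨Octonion.naAssociator_self_left a b, Octonion.naAssociator_self_right a b⟩,
    ?_, ?_, ?_⟩
  -- the units `i`, `j` of the first two doublings and `ℓ` of the last one
  · exact fun h => absurd (h ⟨⟨⟨0, 1⟩, 0⟩, 0⟩ ⟨⟨0, ⟨1, 0⟩⟩, 0⟩ ⟨0, ⟨⟨1, 0⟩, 0⟩⟩) (by decide)
  · exact fun h => absurd (h ⟨⟨⟨0, 1⟩, 0⟩, 0⟩ ⟨⟨0, ⟨1, 0⟩⟩, 0⟩) (by decide)
  · exact isCentrallyEssential_of_add_self_mem_ringCenter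
      (add_self_mem_ringCenter (naAssociator_add_self_eq_zero_of_ringHom hker' hF₂.mul_assoc)
        (naCommutator_add_self_eq_zero_of_ringHom hker' hF₂.mul_comm))
      (Octonion.exists_add_self_eq hhalf)
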